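/- For the timed gluttonous algorithm with stage parameter c > 1, where the activity of a supernode in stage i is determined by whether its leader s satisfies level(s) = ⌈log_c d(s, s̄)⌉ ≥ i, every demand pair is connected by the end of stage level(s): the final output is a feasible Steiner forest. -/
import Mathlib


open scoped Classical

/-- The cost of a chain of vertices, where a step within a supernode is free and a
step between supernodes costs the underlying metric distance. -/
noncomputable def chainCost {V ι : Type*} (d : V → V → ℝ) (cl : V → ι) : List V → ℝ
  | [] => 0
  | [_] => 0
  | a :: b :: rest => (if cl a = cl b then 0 else d a b) + chainCost d cl (b :: rest)

/-- The `C`-punctured distance `d_{M/C}(u,v)`. -/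
noncomputable def pDist {V ι : Type*} (d : V → V → ℝ) (cl : V → ι) (u v : V) : ℝ :=
  sInf {x | ∃ l : List V, l.head? = some u ∧ l.getLast? = some v ∧ x = chainCost d cl l}

/-- The punctured distance between two supernodes. -/
noncomputable def superDist {V ι : Type*} (d : V → V → ℝ) (cl : V → ι) (A B : ι) : ℝ :=
  sInf {x | ∃ u v, cl u = A ∧ cl v = B ∧ x = pDist d cl u v}

/-- The level of a terminal `s`: `⌈log_c d(s, s̄)⌉`. -/
noncomputable def tlevel {V : Type*} (c : ℝ) (d : V → V → ℝ) (mate : V → V) (s : V) : ℤ :=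
  ⌈Real.logb c (d s (mate s))⌉

/-- A run of the timed gluttonous algorithm with stage parameter `c`, recorded by the
clustering `cl i` at the start of each stage `i`.  Supernodes only merge from stage to
stage, and at the end of stage `i` (= start of stage `i+1`) any two distinct
supernodes that were active during stage `i` (i.e. contain a terminal of level `≥ i`)
are at punctured distance greater than `c^(i+1)`. -/
structure TimedRun (V : Type*) [Fintype V] (c : ℝ) (d : V → V → ℝ) (mate : V → V) where
  cl : ℕ → V → ℕ
  /-- initially every terminal is its own supernode -/
  init : ∀ u v : V, cl 0 u = cl 0 v → u = v
  /-- supernodes only merge -/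
  refine : ∀ i, ∀ u v : V, cl i u = cl i v → cl (i + 1) u = cl (i + 1) v
  /-- stage `i` ends only when all supernodes active during stage `i` are pairwise
  further than `c^(i+1)` apart in the punctured metric -/
  sep : ∀ i : ℕ, ∀ k k' : ℕ, k ≠ k' →
    (∃ v, cl (i + 1) v = k ∧ (i : ℤ) ≤ tlevel c d mate v) →
    (∃ v, cl (i + 1) v = k' ∧ (i : ℤ) ≤ tlevel c d mate v) →
    c ^ (i + 1) < superDist d (cl (i + 1)) k k'

lemma chainCost_nonneg {V ι : Type*} (d : V → V → ℝ) (hd : ∀ u v, 0 ≤ d u v)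
    (cl : V → ι) : ∀ l : List V, 0 ≤ chainCost d cl l
  | [] => le_refl 0
  | [_] => le_refl 0
  | a :: b :: rest => by
      have := chainCost_nonneg d hd cl (b :: rest)
      simp only [chainCost]
      have h1 : (0:ℝ) ≤ (if cl a = cl b then 0 else d a b) := by
        split <;> simp [hd]
      linarith

lemma pDist_nonneg {V ι : Type*} (d : V → V → ℝ) (hd : ∀ u v, 0 ≤ d u v)
    (cl : V → ι) (u v : V) : 0 ≤ pDist d cl u v := by
  apply Real.sInf_nonneg
  rintro x ⟨l, -, -, rfl⟩
  exact chainCost_nonneg d hd cl l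

lemma pDist_le {V ι : Type*} (d : V → V → ℝ) (hd : ∀ u v, 0 ≤ d u v)
    (cl : V → ι) (u v : V) : pDist d cl u v ≤ d u v := by
  have hmem : (if cl u = cl v then (0:ℝ) else d u v)
      ∈ {x | ∃ l : List V, l.head? = some u ∧ l.getLast? = some v ∧ x = chainCost d cl l} := by
    refine ⟨[u, v], rfl, rfl, ?_⟩
    simp [chainCost]
  have := csInf_le
    ⟨0, by rintro x ⟨l, -, -, rfl⟩; exact chainCost_nonneg d hd cl l⟩ hmem
  refine this.trans ?_
  split <;> simp [hd]

lemma superDist_le {V ι : Type*} (d : V → V → ℝ) (hd : ∀ u v, 0 ≤ d u v)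
    (cl : V → ι) (u v : V) : superDist d cl (cl u) (cl v) ≤ pDist d cl u v := by
  exact csInf_le ⟨0, by rintro x ⟨a, b, -, -, rfl⟩; exact pDist_nonneg d hd cl a b⟩
    ⟨u, v, rfl, rfl, rfl⟩

/-- Feasibility of timed gluttonous: every demand pair `(s, s̄)` is connected (lies in
the same supernode) by the end of stage `level(s)`, so the final output is a feasible
Steiner forest. -/
theorem timed_gluttonous_feasible {V : Type*} [Fintype V]
    (c : ℝ) (hc : 1 < c)
    (d : V → V → ℝ) (hd : ∀ u v, 0 ≤ d u v) (hdsymm : ∀ u v, d u v = d v u)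
    (mate : V → V) (hmate : Function.Involutive mate)
    (hsep : ∀ s : V, mate s ≠ s) (hone : ∀ s : V, 1 ≤ d s (mate s))
    (R : TimedRun V c d mate) :
    ∀ s : V, R.cl ((tlevel c d mate s).toNat + 1) s =
      R.cl ((tlevel c d mate s).toNat + 1) (mate s) := by
  intro s
  set ℓ := tlevel c d mate s with hℓ
  set i := ℓ.toNat with hi
  have hdpos : (0:ℝ) < d s (mate s) := lt_of_lt_of_le one_pos (hone s)
  have hℓ0 : 0 ≤ ℓ := Int.ceil_nonneg (Real.logb_nonneg hc (hone s))
  have hiℓ : (i : ℤ) = ℓ := Int.toNat_of_nonneg hℓ0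
  by_contra hne
  have hmates : tlevel c d mate (mate s) = ℓ := by
    simp only [tlevel, hℓ, hmate s, hdsymm (mate s) s]
  have hsep' := R.sep i (R.cl (i+1) s) (R.cl (i+1) (mate s)) hne
    ⟨s, rfl, by rw [hiℓ]⟩ ⟨mate s, rfl, by rw [hmates, hiℓ]⟩
  -- d s (mate s) ≤ c ^ i
  have hlog : Real.logb c (d s (mate s)) ≤ (i : ℝ) := by
    exact (Int.le_ceil _).trans_eq (by exact_mod_cast hiℓ.symm)
  have hdle : d s (mate s) ≤ c ^ i := by
    have := (Real.logb_le_iff_le_rpow hc hdpos).mp hlog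
    rwa [Real.rpow_natCast] at this
  have h1 : superDist d (R.cl (i+1)) (R.cl (i+1) s) (R.cl (i+1) (mate s))
      ≤ d s (mate s) :=
    (superDist_le d hd _ s (mate s)).trans (pDist_le d hd _ s (mate s))
  have h2 : c ^ i ≤ c ^ (i + 1) :=
    pow_le_pow_right₀ (le_of_lt hc) (Nat.le_succ i)
  linarith
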